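/- With the notation of the previous statement, set Q := 1 − G_max, where G_max := max_{0 ≤ k < N} Re(Z* z_k) and Z is uniform on S¹. Then E[Q²] = 3/2 + (1/(4π)) Σ_{i=0}^{N−1} ( sin Δ_i − 8 sin(Δ_i/2) ), where Δ_i are the angular gaps between consecutive points z_i on the unit circle (summing to 2π). -/

import Mathlib

/-!
By `2π`-periodicity the integral over `[0, 2π)` may be taken over `[θ₀, θ₀ + 2π]` and split
along the arcs between consecutive points. On the arc `[a, b]` the nearest point is an
endpoint, so `G_max(θ) = max (cos (θ - a)) (cos (b - θ))`, which is `cos (θ - a)` on the first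
half of the arc and `cos (b - θ)` on the second. Each half contributes
`∫₀^{Δ/2} (1 - cos ω)² dω = 3Δ/4 - 2 sin (Δ/2) + sin Δ / 4`, and the gaps sum to `2π`.
-/

open MeasureTheory Real

noncomputable section

/-- `G_max(θ) := max_k Re( conj(e^{iθ}) z_k )` where `z_k = e^{i t_k}`. -/
def gmax (N : ℕ) (t : Fin N → ℝ) (θ : ℝ) : ℝ :=
  ⨆ k : Fin N,
    ((starRingEnd ℂ) (Complex.exp (θ * Complex.I)) * Complex.exp ((t k : ℂ) * Complex.I)).re

/-- Angular gaps `Δ_i := θ_{i+1} − θ_i`, with `θ_N := θ₀ + 2π`. -/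
def gap (N : ℕ) (t : Fin N → ℝ) (i : Fin N) : ℝ :=
  (if h : (i : ℕ) + 1 < N then t ⟨(i : ℕ) + 1, h⟩ else t ⟨0, Nat.pos_of_ne_zero (by omega)⟩ + 2 * π) - t i

theorem cos_le_max_cos_of_mem_Icc {α β d : ℝ} (hα : 0 ≤ α) (hβ : 0 ≤ β)
    (hd : d ∈ Set.Icc α (2 * π - β)) : cos d ≤ max (cos α) (cos β) := by
  rcases le_total d π with hdπ | hdπ
  · exact le_max_of_le_left (cos_le_cos_of_nonneg_of_le_pi hα hdπ hd.1)
  · rw [← cos_two_pi_sub]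
    exact le_max_of_le_right (cos_le_cos_of_nonneg_of_le_pi hβ (by linarith) (by linarith [hd.2]))

theorem max_cos_cos_sub_eq_left {Δ x : ℝ} (hΔ : Δ ≤ 2 * π) (hx : x ∈ Set.Icc 0 (Δ / 2)) :
    max (cos x) (cos (Δ - x)) = cos x := by
  refine max_eq_left ?_
  simpa using cos_le_max_cos_of_mem_Icc (d := Δ - x) hx.1 hx.1
    ⟨by linarith [hx.2], by linarith [hx.2]⟩

theorem integral_one_sub_cos_sq (x : ℝ) :
    ∫ ω in (0 : ℝ)..x, (1 - cos ω) ^ 2 = 3 / 2 * x - 2 * sin x + sin x * cos x / 2 := by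
  have hderiv : ∀ ω ∈ Set.uIcc 0 x,
      HasDerivAt (fun y => 3 / 2 * y - 2 * sin y + sin y * cos y / 2) ((1 - cos ω) ^ 2) ω := by
    intro ω _
    have h : HasDerivAt (fun y => 3 / 2 * y - 2 * sin y + sin y * cos y / 2)
        (3 / 2 * 1 - 2 * cos ω + (cos ω * cos ω + sin ω * -sin ω) / 2) ω :=
      (((hasDerivAt_id ω).const_mul (3 / 2 : ℝ)).sub ((hasDerivAt_sin ω).const_mul 2)).add
        (((hasDerivAt_sin ω).mul (hasDerivAt_cos ω)).div_const 2)
    convert h using 1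
    nlinarith [sin_sq_add_cos_sq ω]
  rw [intervalIntegral.integral_eq_sub_of_hasDerivAt hderiv
    (Continuous.intervalIntegrable (by fun_prop) _ _)]
  simp

theorem integral_one_sub_max_cos_sq {a b : ℝ} (hab : a ≤ b) (hba : b ≤ a + 2 * π) :
    ∫ θ in a..b, (1 - max (cos (θ - a)) (cos (b - θ))) ^ 2 =
      3 / 2 * (b - a) - 4 * sin ((b - a) / 2) + sin (b - a) / 2 := by
  set Δ := b - a
  have hΔ : Δ ≤ 2 * π := by linarith
  have hshift : ∫ θ in a..b, (1 - max (cos (θ - a)) (cos (b - θ))) ^ 2 =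
      ∫ x in (0 : ℝ)..Δ, (1 - max (cos x) (cos (Δ - x))) ^ 2 := by
    have h := intervalIntegral.integral_comp_sub_right (a := a) (b := b)
      (fun x => (1 - max (cos x) (cos (Δ - x))) ^ 2) a
    simpa only [sub_self, Δ, sub_sub_sub_cancel_right] using h
  have hleft : ∫ x in (0 : ℝ)..Δ / 2, (1 - max (cos x) (cos (Δ - x))) ^ 2 =
      ∫ x in (0 : ℝ)..Δ / 2, (1 - cos x) ^ 2 := by
    refine intervalIntegral.integral_congr fun x hx => ?_
    rw [Set.uIcc_of_le (by linarith)] at hx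
    simp only [max_cos_cos_sub_eq_left hΔ hx]
  have hright : ∫ x in Δ / 2..Δ, (1 - max (cos x) (cos (Δ - x))) ^ 2 =
      ∫ x in (0 : ℝ)..Δ / 2, (1 - cos x) ^ 2 := by
    have hsymm : ∫ x in Δ / 2..Δ, (1 - max (cos x) (cos (Δ - x))) ^ 2 =
        ∫ x in Δ / 2..Δ, (1 - cos (Δ - x)) ^ 2 := by
      refine intervalIntegral.integral_congr fun x hx => ?_
      rw [Set.uIcc_of_le (by linarith)] at hx
      have hx' : Δ - x ∈ Set.Icc 0 (Δ / 2) := ⟨by linarith [hx.2], by linarith [hx.1]⟩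
      have hmax := max_cos_cos_sub_eq_left hΔ hx'
      rw [sub_sub_cancel] at hmax
      rw [max_comm, hmax]
    rw [hsymm, intervalIntegral.integral_comp_sub_left (fun x => (1 - cos x) ^ 2) Δ, sub_self,
      sub_half]
  have hcont : Continuous fun x => (1 - max (cos x) (cos (Δ - x))) ^ 2 := by fun_prop
  rw [hshift, ← intervalIntegral.integral_add_adjacent_intervals
    (hcont.intervalIntegrable 0 (Δ / 2)) (hcont.intervalIntegrable _ _), hleft, hright,
    integral_one_sub_cos_sq, show Δ = 2 * (Δ / 2) by ring, sin_two_mul]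
  ring_nf

section

variable {N : ℕ} {u : ℕ → ℝ}

theorem iSup_cos_sub_eq_max_of_mem_Icc (hu : Monotone u) (hper : u N = u 0 + 2 * π) {i : ℕ}
    (hi : i < N) {θ : ℝ} (hθ : θ ∈ Set.Icc (u i) (u (i + 1))) :
    ⨆ k : Fin N, cos (θ - u k) = max (cos (θ - u i)) (cos (u (i + 1) - θ)) := by
  have : Nonempty (Fin N) := ⟨⟨i, hi⟩⟩
  have hbdd : BddAbove (Set.range fun k : Fin N => cos (θ - u k)) :=
    (Set.finite_range _).bddAbove
  have hi0 : u 0 ≤ u i := hu i.zero_le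
  have hiN : u (i + 1) ≤ u N := hu hi
  refine le_antisymm (ciSup_le fun k => ?_) (max_le (le_ciSup hbdd ⟨i, hi⟩) ?_)
  · rcases le_or_gt (k : ℕ) i with hk | hk
    · have hk0 : u 0 ≤ u k := hu (k : ℕ).zero_le
      have hki : u k ≤ u i := hu hk
      exact cos_le_max_cos_of_mem_Icc (by linarith [hθ.1]) (by linarith [hθ.2])
        ⟨by linarith, by linarith⟩
    · have hik : u (i + 1) ≤ u k := hu hk
      have hkN : u k ≤ u N := hu k.isLt.le
      rw [← cos_neg, neg_sub, max_comm]
      exact cos_le_max_cos_of_mem_Icc (by linarith [hθ.2]) (by linarith [hθ.1])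
        ⟨by linarith [hθ.2], by linarith⟩
  · rcases (show i + 1 ≤ N from hi).lt_or_eq with hlt | hlast
    · rw [← cos_neg, neg_sub]
      exact le_ciSup hbdd ⟨i + 1, hlt⟩
    · rw [hlast, hper, ← cos_neg, neg_sub, ← sub_sub, cos_sub_two_pi]
      exact le_ciSup hbdd ⟨0, i.zero_lt_succ.trans_eq hlast⟩

theorem integral_one_sub_iSup_cos_sub_sq (hu : Monotone u) (hper : u N = u 0 + 2 * π) :
    ∫ θ in u 0..u N, (1 - ⨆ k : Fin N, cos (θ - u k)) ^ 2 =
      ∑ i ∈ Finset.range N, (3 / 2 * (u (i + 1) - u i) - 4 * sin ((u (i + 1) - u i) / 2) +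
        sin (u (i + 1) - u i) / 2) := by
  have harc : ∀ i < N, Set.EqOn (fun θ => (1 - ⨆ k : Fin N, cos (θ - u k)) ^ 2)
      (fun θ => (1 - max (cos (θ - u i)) (cos (u (i + 1) - θ))) ^ 2)
      (Set.Icc (u i) (u (i + 1))) := fun i hi θ hθ => by
    simp only [iSup_cos_sub_eq_max_of_mem_Icc hu hper hi hθ]
  rw [← intervalIntegral.sum_integral_adjacent_intervals fun i hi =>
    ((by fun_prop : Continuous _).continuousOn.congr (harc i hi)).intervalIntegrable_of_Icc
      (hu i.le_succ)]
  refine Finset.sum_congr rfl fun i hi => ?_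
  have hi := Finset.mem_range.1 hi
  have hspan : u (i + 1) ≤ u i + 2 * π := by linarith [hu hi, hu i.zero_le]
  rw [intervalIntegral.integral_congr (Set.uIcc_of_le (hu i.le_succ) ▸ harc i hi),
    integral_one_sub_max_cos_sq (hu i.le_succ) hspan]

end

theorem gmax_eq_iSup_cos (N : ℕ) (t : Fin N → ℝ) (θ : ℝ) :
    gmax N t θ = ⨆ k : Fin N, cos (θ - t k) := by
  refine iSup_congr fun k => ?_
  rw [← Complex.exp_conj, ← Complex.exp_add, ← cos_neg, neg_sub]
  convert Complex.exp_ofReal_mul_I_re (t k - θ) using 3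
  simp [Complex.ext_iff]
  ring

theorem gmax_periodic (N : ℕ) (t : Fin N → ℝ) : Function.Periodic (gmax N t) (2 * π) := by
  intro θ
  simp only [gmax_eq_iSup_cos, add_sub_right_comm, cos_add_two_pi]

def unrolledNodes {N : ℕ} (hN : 0 < N) (t : Fin N → ℝ) (k : ℕ) : ℝ :=
  if h : k < N then t ⟨k, h⟩ else t ⟨0, hN⟩ + 2 * π

section UnrolledNodes

variable {N : ℕ} (hN : 0 < N) (t : Fin N → ℝ)

theorem unrolledNodes_fin (i : Fin N) : unrolledNodes hN t i = t i :=
  dif_pos i.isLt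

theorem unrolledNodes_self : unrolledNodes hN t N = unrolledNodes hN t 0 + 2 * π := by
  simp [unrolledNodes, hN]

theorem gap_eq_unrolledNodes_sub (i : Fin N) :
    gap N t i = unrolledNodes hN t (i + 1) - unrolledNodes hN t i := by
  simp only [gap, unrolledNodes, i.isLt, dite_true]

theorem unrolledNodes_monotone (hmono : Monotone t)
    (hspan : ∀ i, t i ≤ t ⟨0, hN⟩ + 2 * π) : Monotone (unrolledNodes hN t) := by
  refine monotone_nat_of_le_succ fun k => ?_
  unfold unrolledNodes
  split_ifs with hk hk1 hk1
  · exact hmono (Fin.mk_le_mk.2 k.le_succ)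
  · exact hspan _
  · omega
  · exact le_rfl

end UnrolledNodes

theorem sum_gap {N : ℕ} (hN : 0 < N) (t : Fin N → ℝ) : ∑ i : Fin N, gap N t i = 2 * π := by
  simp only [gap_eq_unrolledNodes_sub hN]
  rw [Fin.sum_univ_eq_sum_range (fun k => unrolledNodes hN t (k + 1) - unrolledNodes hN t k),
    Finset.sum_range_sub, unrolledNodes_self]
  ring

/-- with `Q := 1 − G_max` and `Z` uniform on `S¹`,
`E[Q²] = 3/2 + (1/(4π)) Σ (sin Δ_i − 8 sin(Δ_i/2))`. -/
theorem stmt11 (N : ℕ) (hN : 0 < N) (t : Fin N → ℝ) (hmono : Monotone t)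
    (hrange : ∀ i, t i ∈ Set.Ico (0 : ℝ) (2 * π)) :
    (1 / (2 * π)) * ∫ θ in Set.Ico (0 : ℝ) (2 * π), (1 - gmax N t θ) ^ 2 =
      3 / 2 + (1 / (4 * π)) *
        ∑ i : Fin N, (Real.sin (gap N t i) - 8 * Real.sin (gap N t i / 2)) := by
  set u := unrolledNodes hN t
  have hu : Monotone u := unrolledNodes_monotone hN t hmono fun i => by
    linarith [(hrange i).2, (hrange ⟨0, hN⟩).1]
  have hper : u N = u 0 + 2 * π := unrolledNodes_self hN t
  have hshift : ∫ θ in Set.Ico 0 (2 * π), (1 - gmax N t θ) ^ 2 =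
      ∫ θ in u 0..u N, (1 - gmax N t θ) ^ 2 := by
    rw [integral_Ico_eq_integral_Ioo, ← integral_Ioc_eq_integral_Ioo,
      ← intervalIntegral.integral_of_le two_pi_pos.le, hper]
    simpa using ((gmax_periodic N t).comp fun g => (1 - g) ^ 2).intervalIntegral_add_eq 0 (u 0)
  have hgmax : ∀ θ, gmax N t θ = ⨆ k : Fin N, cos (θ - u k) := fun θ => by
    simp only [gmax_eq_iSup_cos, u, unrolledNodes_fin]
  have harcs : ∑ i : Fin N, (3 / 2 * gap N t i - 4 * sin (gap N t i / 2) + sin (gap N t i) / 2) =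
      3 / 2 * ∑ i : Fin N, gap N t i +
        1 / 2 * ∑ i : Fin N, (sin (gap N t i) - 8 * sin (gap N t i / 2)) := by
    rw [Finset.mul_sum, Finset.mul_sum, ← Finset.sum_add_distrib]
    exact Finset.sum_congr rfl fun i _ => by ring
  have hgap : ∀ i : Fin N, u (i + 1) - u i = gap N t i := fun i =>
    (gap_eq_unrolledNodes_sub hN t i).symm
  rw [hshift, funext hgmax, integral_one_sub_iSup_cos_sub_sq hu hper,
    ← Fin.sum_univ_eq_sum_range (fun i => 3 / 2 * (u (i + 1) - u i) -
      4 * sin ((u (i + 1) - u i) / 2) + sin (u (i + 1) - u i) / 2)]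
  simp only [hgap]
  rw [harcs, sum_gap hN t]
  field_simp
  ring
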